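/- arXiv:2307.16501 — 8 statements merged into one kernel-verified Lean document; each statement's English description precedes it below -/
import Mathlib

section
/- Let S be an affine semigroup in ℕ^d minimally generated by A = {a_1, ..., a_e}, let I_A ⊆ k[x_1,...,x_e] be the toric ideal (kernel of x_i ↦ t^{a_i}), let δ ⊆ {1,...,d}, and let ≺ be a monomial order. Let Q be the set of monomials in the variables {x_i : i ∉ δ} that do not lie in the initial ideal in_≺(I_A + ⟨x_i : i ∈ δ⟩). Then the map Q → ⋂_{i ∈ δ} Ap(S, a_i) sending x^u to ∑_{i ∉ δ} u_i a_i is a bijection. -/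
open MvPolynomial

noncomputable section

/-- The toric ideal of the family `a : Fin e → ℕ^d`: the kernel of
`k[x_1,…,x_e] → k[t_1,…,t_d]`, `x_i ↦ t^{a_i}`. -/
def toricIdeal (k : Type*) [Field k] {e d : ℕ} (a : Fin e → (Fin d → ℕ)) :
    Ideal (MvPolynomial (Fin e) k) :=
  RingHom.ker (MvPolynomial.aeval
    (fun i => AddMonoidAlgebra.single (a i) (1 : k)) :
      MvPolynomial (Fin e) k →ₐ[k] AddMonoidAlgebra k (Fin d → ℕ)).toRingHom

/-- The leading exponent of a polynomial with respect to a monomial order. -/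
def leadExp {e : ℕ} {k : Type*} [Field k] (m : MonomialOrder (Fin e))
    (p : MvPolynomial (Fin e) k) : Fin e →₀ ℕ :=
  m.toSyn.symm (p.support.sup m.toSyn)

/-- The initial ideal of `J` with respect to the monomial order `m`: the ideal generated by
the leading monomials of the nonzero elements of `J`. -/
def initialIdeal {e : ℕ} {k : Type*} [Field k] (m : MonomialOrder (Fin e))
    (J : Ideal (MvPolynomial (Fin e) k)) : Ideal (MvPolynomial (Fin e) k) :=
  Ideal.span {q | ∃ p ∈ J, p ≠ 0 ∧ q = monomial (leadExp m p) (1 : k)}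

/-! Let `φ : x^u ↦ t^{∑ u_i a_i}`, so `I_A = ker φ` and a binomial `x^u - x^v` lies in `I_A` as soon
as `u` and `v` have the same weight `∑ u_i a_i`. Hence two standard monomials of equal weight
coincide (the leading term of their difference would be one of them), and a monomial whose weight
lies in `a_i + S` with `i ∈ δ` is congruent modulo `I_A` to a multiple of `x_i`, so it lies in
`J = I_A + ⟨x_i : i ∈ δ⟩`. Conversely, for `b` in the Apéry set take the `≺`-least exponent `u`
of weight `b`. If `x^u ∈ in_≺(J)`, some `q = f + g ∈ J` with `f ∈ I_A`, `g ∈ ⟨x_i : i ∈ δ⟩` has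
leading exponent `u`; by minimality `u` is the only exponent of weight `b` in `q`, so `φ g = φ q`
has a nonzero coefficient at `b`, while every monomial of `g` is divisible by some `x_i`, `i ∈ δ`,
which puts `b` in `a_i + S`. -/

open Finsupp

section Semigroup

variable {ι M : Type*} [AddCommMonoid M] (a : ι → M)

theorem mem_closure_range_iff_exists_linearCombination {b : M} :
    b ∈ AddSubmonoid.closure (Set.range a) ↔ ∃ u, linearCombination ℕ a u = b := by
  rw [← Submodule.span_nat_eq_addSubmonoidClosure, Submodule.mem_toAddSubmonoid,
    ← range_linearCombination, LinearMap.mem_range]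

theorem linearCombination_mem_closure_range (u : ι →₀ ℕ) :
    linearCombination ℕ a u ∈ AddSubmonoid.closure (Set.range a) :=
  (mem_closure_range_iff_exists_linearCombination a).2 ⟨u, rfl⟩

theorem exists_linearCombination_eq_add_of_ne_zero {u : ι →₀ ℕ} {i : ι} (hi : u i ≠ 0) :
    ∃ s ∈ AddSubmonoid.closure (Set.range a), linearCombination ℕ a u = a i + s := by
  refine ⟨_, linearCombination_mem_closure_range a (u - single i 1), ?_⟩
  have hle : single i 1 ≤ u := single_le_iff.2 (Nat.one_le_iff_ne_zero.2 hi)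
  conv_lhs => rw [← add_tsub_cancel_of_le hle]
  rw [map_add, linearCombination_single, one_smul]

theorem sum_compl_smul_eq_linearCombination [Fintype ι] [DecidableEq ι] {δ : Finset ι}
    {u : ι →₀ ℕ} (hu : ∀ i ∈ δ, u i = 0) :
    ∑ i ∈ δᶜ, u i • a i = linearCombination ℕ a u := by
  rw [linearCombination_apply, sum_fintype _ _ (by simp)]
  refine Finset.sum_subset (Finset.subset_univ _) fun i _ hi => ?_
  rw [hu i (by simpa using hi), zero_smul]

end Semigroup

section ToricMap

variable (k : Type*) [CommSemiring k] {σ M : Type*} [AddCommMonoid M] (a : σ → M)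

def toricMap : MvPolynomial σ k →ₐ[k] AddMonoidAlgebra k M :=
  aeval fun i => AddMonoidAlgebra.single (a i) 1

theorem toricMap_monomial (u : σ →₀ ℕ) (c : k) :
    toricMap k a (monomial u c) = AddMonoidAlgebra.single (linearCombination ℕ a u) c := by
  rw [toricMap, aeval_monomial, Finsupp.prod]
  simp_rw [AddMonoidAlgebra.single_pow, one_pow]
  rw [AddMonoidAlgebra.prod_single, Finset.prod_const_one, linearCombination_apply, Finsupp.sum,
    AddMonoidAlgebra.coe_algebraMap, Function.comp_apply, AddMonoidAlgebra.single_mul_single,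
    zero_add, mul_one, Algebra.algebraMap_self, RingHom.id_apply]

variable {k a}

theorem coeff_toricMap [DecidableEq M] (p : MvPolynomial σ k) (b : M) :
    (toricMap k a p).coeff b = ∑ v ∈ p.support with linearCombination ℕ a v = b, coeff v p := by
  conv_lhs => rw [p.as_sum]
  simp only [map_sum, toricMap_monomial, AddMonoidAlgebra.coeff_sum, Finset.sum_apply',
    Finset.sum_filter, AddMonoidAlgebra.coeff_single, single_apply]

theorem exists_mem_support_of_coeff_toricMap_ne_zero {p : MvPolynomial σ k} {b : M}
    (h : (toricMap k a p).coeff b ≠ 0) : ∃ v ∈ p.support, linearCombination ℕ a v = b := by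
  classical
  rw [coeff_toricMap] at h
  obtain ⟨v, hv, -⟩ := Finset.exists_ne_zero_of_sum_ne_zero h
  exact ⟨v, (Finset.mem_filter.1 hv).1, (Finset.mem_filter.1 hv).2⟩

theorem coeff_toricMap_of_forall_eq {p : MvPolynomial σ k} {u : σ →₀ ℕ}
    (hu : ∀ v ∈ p.support, linearCombination ℕ a v = linearCombination ℕ a u → v = u) :
    (toricMap k a p).coeff (linearCombination ℕ a u) = coeff u p := by
  classical
  rw [coeff_toricMap]
  refine Finset.sum_eq_single u
    (fun v hv hvu => absurd (hu v (Finset.mem_filter.1 hv).1 (Finset.mem_filter.1 hv).2) hvu)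
    fun hu' => MvPolynomial.notMem_support_iff.1 fun h => hu' (Finset.mem_filter.2 ⟨h, rfl⟩)

end ToricMap

section ToricIdeal

variable {k : Type*} [Field k] {e d : ℕ} {a : Fin e → (Fin d → ℕ)}

theorem mem_toricIdeal_iff {p : MvPolynomial (Fin e) k} :
    p ∈ toricIdeal k a ↔ toricMap k a p = 0 :=
  Iff.rfl

theorem monomial_sub_monomial_mem_toricIdeal {u v : Fin e →₀ ℕ}
    (h : linearCombination ℕ a u = linearCombination ℕ a v) :
    monomial u (1 : k) - monomial v 1 ∈ toricIdeal k a := by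
  rw [mem_toricIdeal_iff, map_sub, toricMap_monomial, toricMap_monomial, h, sub_self]

end ToricIdeal

section InitialIdeal

variable {k : Type*} [Field k] {e : ℕ} (m : MonomialOrder (Fin e))
  {J : Ideal (MvPolynomial (Fin e) k)}

theorem leadExp_eq_degree (p : MvPolynomial (Fin e) k) : leadExp m p = m.degree p :=
  rfl

theorem monomial_degree_mem_initialIdeal {p : MvPolynomial (Fin e) k} (hp : p ∈ J)
    (hp0 : p ≠ 0) : monomial (m.degree p) 1 ∈ initialIdeal m J :=
  Ideal.subset_span ⟨p, hp, hp0, rfl⟩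

theorem monomial_mem_initialIdeal_of_mem {u : Fin e →₀ ℕ} (hu : monomial u (1 : k) ∈ J) :
    monomial u 1 ∈ initialIdeal m J := by
  classical
  simpa [MonomialOrder.degree_monomial] using
    monomial_degree_mem_initialIdeal m hu (monomial_eq_zero.not.2 one_ne_zero)

theorem initialIdeal_eq_span_monomial_image :
    initialIdeal m J =
      Ideal.span ((fun s => monomial s (1 : k)) '' {w | ∃ p ∈ J, p ≠ 0 ∧ m.degree p = w}) := by
  rw [initialIdeal]
  congr 1
  ext q
  simp only [Set.mem_ofPred_eq, Set.mem_image, leadExp_eq_degree]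
  constructor
  · rintro ⟨p, hp, hp0, rfl⟩
    exact ⟨_, ⟨p, hp, hp0, rfl⟩, rfl⟩
  · rintro ⟨_, ⟨p, hp, hp0, rfl⟩, rfl⟩
    exact ⟨p, hp, hp0, rfl⟩

theorem monomial_mem_initialIdeal_iff {u : Fin e →₀ ℕ} :
    monomial u (1 : k) ∈ initialIdeal m J ↔ ∃ p ∈ J, p ≠ 0 ∧ m.degree p = u := by
  classical
  refine ⟨fun h => ?_, fun ⟨p, hp, hp0, hpu⟩ => hpu ▸ monomial_degree_mem_initialIdeal m hp hp0⟩
  rw [initialIdeal_eq_span_monomial_image, mem_ideal_span_monomial_image] at h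
  obtain ⟨_, ⟨p, hp, hp0, rfl⟩, hle⟩ := h u (by simp)
  have hx0 : monomial (u - m.degree p) (1 : k) ≠ 0 := monomial_eq_zero.not.2 one_ne_zero
  refine ⟨_, J.mul_mem_left (monomial (u - m.degree p) 1) hp, mul_ne_zero hx0 hp0, ?_⟩
  rw [MonomialOrder.degree_mul hx0 hp0, MonomialOrder.degree_monomial, if_neg one_ne_zero,
    tsub_add_cancel_of_le hle]

end InitialIdeal

section AperySet

variable {k : Type*} [Field k] {e d : ℕ} {a : Fin e → (Fin d → ℕ)} (m : MonomialOrder (Fin e))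
  {J : Ideal (MvPolynomial (Fin e) k)}

theorem monomial_mem_initialIdeal_of_eq_add (hJ : toricIdeal k a ≤ J) {i : Fin e}
    (hi : X i ∈ J) {u : Fin e →₀ ℕ} {s : Fin d → ℕ}
    (hs : s ∈ AddSubmonoid.closure (Set.range a)) (h : linearCombination ℕ a u = a i + s) :
    monomial u (1 : k) ∈ initialIdeal m J := by
  obtain ⟨v, rfl⟩ := (mem_closure_range_iff_exists_linearCombination a).1 hs
  have hbinomial : monomial u (1 : k) - monomial (single i 1 + v) 1 ∈ J :=
    hJ (monomial_sub_monomial_mem_toricIdeal (by rw [h, map_add, linearCombination_single,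
      one_smul]))
  have hdivisible : monomial (single i 1 + v) (1 : k) ∈ J := by
    rw [← mul_one (1 : k), ← monomial_mul, ← X]
    exact J.mul_mem_right _ hi
  exact monomial_mem_initialIdeal_of_mem m (by simpa using J.add_mem hbinomial hdivisible)

theorem eq_of_linearCombination_eq (hJ : toricIdeal k a ≤ J) {u v : Fin e →₀ ℕ}
    (hu : monomial u (1 : k) ∉ initialIdeal m J) (hv : monomial v (1 : k) ∉ initialIdeal m J)
    (h : linearCombination ℕ a u = linearCombination ℕ a v) : u = v := by
  classical
  by_contra huv
  set p := monomial u (1 : k) - monomial v 1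
  have hpJ : p ∈ J := hJ (monomial_sub_monomial_mem_toricIdeal h)
  have hp0 : p ≠ 0 := sub_ne_zero.2 fun h => huv (monomial_left_injective one_ne_zero h)
  obtain hdeg | hdeg : u = m.degree p ∨ v = m.degree p := by
    simpa using support_sub _ _ _ (m.degree_mem_support hp0)
  · exact hu (hdeg ▸ monomial_degree_mem_initialIdeal m hpJ hp0)
  · exact hv (hdeg ▸ monomial_degree_mem_initialIdeal m hpJ hp0)

theorem exists_eq_add_of_mem_span_X {δ : Finset (Fin e)} {g : MvPolynomial (Fin e) k}
    (hg : g ∈ Ideal.span (X '' (δ : Set (Fin e)))) {b : Fin d → ℕ}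
    (hb : (toricMap k a g).coeff b ≠ 0) :
    ∃ i ∈ δ, ∃ s ∈ AddSubmonoid.closure (Set.range a), b = a i + s := by
  obtain ⟨v, hv, rfl⟩ := exists_mem_support_of_coeff_toricMap_ne_zero hb
  obtain ⟨i, hi, hvi⟩ := mem_ideal_span_X_image.1 hg v hv
  exact ⟨i, hi, exists_linearCombination_eq_add_of_ne_zero a hvi⟩

theorem monomial_notMem_initialIdeal_of_minimal {δ : Finset (Fin e)} {u : Fin e →₀ ℕ}
    (hb : ∀ i ∈ δ, ¬ ∃ s ∈ AddSubmonoid.closure (Set.range a),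
      linearCombination ℕ a u = a i + s)
    (hmin : ∀ v, linearCombination ℕ a v = linearCombination ℕ a u → m.toSyn u ≤ m.toSyn v) :
    monomial u (1 : k) ∉
      initialIdeal m (toricIdeal k a ⊔ Ideal.span (X '' (δ : Set (Fin e)))) := by
  intro hu
  obtain ⟨q, hq, hq0, rfl⟩ := (monomial_mem_initialIdeal_iff m).1 hu
  obtain ⟨f, hf, g, hg, rfl⟩ := Submodule.mem_sup.1 hq
  have hcoeff : (toricMap k a (f + g)).coeff (linearCombination ℕ a (m.degree (f + g))) ≠ 0 := by
    rw [coeff_toricMap_of_forall_eq fun v hv hva =>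
      m.toSyn.injective (le_antisymm (m.le_degree hv) (hmin v hva))]
    exact m.coeff_degree_ne_zero_iff.2 hq0
  rw [map_add, mem_toricIdeal_iff.1 hf, zero_add] at hcoeff
  obtain ⟨i, hi, hia⟩ := exists_eq_add_of_mem_span_X hg hcoeff
  exact hb i hi hia

end AperySet

theorem aperySet_groebner_bijection_general (k : Type*) [Field k] {e d : ℕ}
    (a : Fin e → (Fin d → ℕ)) (m : MonomialOrder (Fin e))
    (δ : Finset (Fin e)) :
    Set.BijOn (fun u : Fin e →₀ ℕ => ∑ i ∈ δᶜ, u i • a i)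
      {u : Fin e →₀ ℕ | (∀ i ∈ δ, u i = 0) ∧
        (monomial u (1 : k)) ∉
          initialIdeal m (toricIdeal k a ⊔ Ideal.span ((fun i => X i) '' ↑δ))}
      {b | b ∈ AddSubmonoid.closure (Set.range a) ∧
        ∀ i ∈ δ, ¬ ∃ s ∈ AddSubmonoid.closure (Set.range a), b = a i + s} := by
  have hJ : toricIdeal k a ≤ toricIdeal k a ⊔ Ideal.span ((fun i => X i) '' ↑δ) := le_sup_left
  refine Set.BijOn.congr (f₁ := linearCombination ℕ a) ⟨?_, ?_, ?_⟩
    fun u hu => (sum_compl_smul_eq_linearCombination a hu.1).symm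
  · rintro u ⟨-, hu⟩
    refine ⟨linearCombination_mem_closure_range a u, fun i hi ⟨s, hs, h⟩ => hu ?_⟩
    exact monomial_mem_initialIdeal_of_eq_add m hJ
      (Ideal.mem_sup_right (Ideal.subset_span ⟨i, hi, rfl⟩)) hs h
  · rintro u ⟨-, hu⟩ v ⟨-, hv⟩ h
    exact eq_of_linearCombination_eq m hJ hu hv h
  · rintro b ⟨hbS, hb⟩
    obtain ⟨u, rfl, hmin⟩ : ∃ u, linearCombination ℕ a u = b ∧
        ∀ v, linearCombination ℕ a v = b → m.toSyn u ≤ m.toSyn v := by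
      obtain ⟨u₀, hu₀⟩ := (mem_closure_range_iff_exists_linearCombination a).1 hbS
      obtain ⟨u, hu, hmin⟩ := (InvImage.wf m.toSyn wellFounded_lt).has_min
        {u | linearCombination ℕ a u = b} ⟨u₀, hu₀⟩
      exact ⟨u, hu, fun v hv => not_lt.1 (hmin v hv)⟩
    refine ⟨u, ⟨fun i hi => ?_, monomial_notMem_initialIdeal_of_minimal m hb hmin⟩, rfl⟩
    by_contra hui
    exact hb i hi (exists_linearCombination_eq_add_of_ne_zero a hui)

/-- let `S` be the affine semigroup generated by `a_1,…,a_e ∈ ℕ^d`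
(with `E = {a_1,…,a_d}` the extremal rays), `δ ⊆ {1,…,d}`, `≺` a monomial order and
`Q` the set of (exponents of) monomials in the variables `{x_i : i ∉ δ}` not lying in
`in_≺(I_A + ⟨x_i : i ∈ δ⟩)`.  Then `x^u ↦ ∑_{i ∉ δ} u_i a_i` is a bijection from `Q`
onto `⋂_{i ∈ δ} Ap(S, a_i)`. -/
theorem aperySet_groebner_bijection (k : Type*) [Field k] {e d : ℕ} (hde : d ≤ e)
    (a : Fin e → (Fin d → ℕ)) (m : MonomialOrder (Fin e))
    (δ : Finset (Fin e)) (hδ : ∀ i ∈ δ, (i : ℕ) < d) :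
    Set.BijOn (fun u : Fin e →₀ ℕ => ∑ i ∈ δᶜ, u i • a i)
      {u : Fin e →₀ ℕ | (∀ i ∈ δ, u i = 0) ∧
        (monomial u (1 : k)) ∉
          initialIdeal m (toricIdeal k a ⊔ Ideal.span ((fun i => X i) '' ↑δ))}
      {b | b ∈ AddSubmonoid.closure (Set.range a) ∧
        ∀ i ∈ δ, ¬ ∃ s ∈ AddSubmonoid.closure (Set.range a), b = a i + s} :=
  aperySet_groebner_bijection_general k a m δ

end
end

section
/- Let S be an affine semigroup in ℕ^d minimally generated by A = {a_1,...,a_e}, e ≥ 3, with toric ideal I_A ⊆ k[x_1,...,x_e], and let i ≠ j. Then x_j is a zero-divisor on k[x]/(I_A + ⟨x_i⟩) if and only if there exists b ∈ Ap(S, a_i) such that a_j + b ∉ Ap(S, a_i). -/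
open MvPolynomial

/-!
Let `φ : k[x] → k[S]` send `x^m` to `t^{∑ mₙ aₙ}`, so that `I_A = ker φ`. A polynomial `f` lies in
`I_A + ⟨x_i⟩` exactly when `φ f` is supported on `a_i + S`: the image of `x_i g` is `t^{a_i} φ g`,
and conversely such a `φ f` equals `φ (x_i g)` for a combination `g` of monomials, so that
`f - x_i g ∈ I_A`. Multiplication by `x_j` shifts supports injectively by `a_j`.
So if `x_j f ∈ I_A + ⟨x_i⟩` with `f ∉ I_A + ⟨x_i⟩`, some `b` in the support of `φ f` lies in
`Ap(S, a_i)` while `a_j + b` does not; conversely, for such a `b = ∑ mₙ aₙ` the monomial `x^m`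
is killed by `x_j` modulo `I_A + ⟨x_i⟩`.
-/

open AddMonoidAlgebra AddSubmonoid

theorem Ideal.Quotient.exists_ne_zero_mk_mul_eq_zero_iff {R : Type*} [CommRing R] (I : Ideal R)
    (x : R) : (∃ s : R ⧸ I, s ≠ 0 ∧ Ideal.Quotient.mk I x * s = 0) ↔ ∃ f ∉ I, x * f ∈ I := by
  simp only [Ideal.Quotient.mk_surjective.exists, ne_eq, ← map_mul,
    Ideal.Quotient.eq_zero_iff_mem]

theorem Ideal.mem_ker_sup_iff {R T F : Type*} [Ring R] [Ring T] [FunLike F R T]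
    [RingHomClass F R T] (φ : F) (I : Ideal R) (f : R) :
    f ∈ RingHom.ker φ ⊔ I ↔ ∃ g ∈ I, φ f = φ g := by
  refine ⟨fun hf => ?_, fun ⟨g, hg, hfg⟩ => ?_⟩
  · obtain ⟨h, hh, g, hg, rfl⟩ := Submodule.mem_sup.mp hf
    exact ⟨g, hg, by rw [map_add, RingHom.mem_ker.mp hh, zero_add]⟩
  · rw [← sub_add_cancel f g]
    exact add_mem (Ideal.mem_sup_left (by simp [hfg])) (Ideal.mem_sup_right hg)

theorem AddSubmonoid.mem_closure_range_iff_exists_weight {σ M : Type*} [AddCommMonoid M]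
    {a : σ → M} {x : M} : x ∈ closure (Set.range a) ↔ ∃ m : σ →₀ ℕ, m.weight a = x := by
  simp [mem_closure_range_iff, Finsupp.weight_apply, eq_comm]

def AddSubmonoid.apery {M : Type*} [AddCommMonoid M] (S : AddSubmonoid M) (x : M) : Set M :=
  {b | b ∈ S ∧ ¬ ∃ s ∈ S, b = x + s}

namespace MvPolynomial

section

variable (k : Type*) {σ M : Type*} [CommSemiring k] [AddCommMonoid M] (a : σ → M)

noncomputable def monomialMap : MvPolynomial σ k →ₐ[k] AddMonoidAlgebra k M :=
  aeval fun n => single (a n) 1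

variable {k a}

@[simp]
theorem monomialMap_monomial (m : σ →₀ ℕ) (c : k) :
    monomialMap k a (monomial m c) = single (m.weight a) c := by
  simp [monomialMap, aeval_monomial, Finsupp.prod, Finsupp.weight_apply, Finsupp.sum]

@[simp]
theorem monomialMap_X (n : σ) : monomialMap k a (X n) = single (a n) 1 := by
  simp [monomialMap]

theorem support_monomialMap_subset (f : MvPolynomial σ k) :
    ↑(monomialMap k a f).coeff.support ⊆ (closure (Set.range a) : Set M) := by
  classical
  induction f using MvPolynomial.induction_on' with
  | monomial m c =>
    rw [monomialMap_monomial, coeff_single]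
    refine (Finset.coe_subset.mpr Finsupp.support_single_subset).trans ?_
    simpa using mem_closure_range_iff_exists_weight.mpr ⟨m, rfl⟩
  | add p q hp hq =>
    rw [map_add, AddMonoidAlgebra.coeff_add]
    exact (Finset.coe_subset.mpr Finsupp.support_add).trans (by simpa using ⟨hp, hq⟩)

theorem support_monomialMap_X_mul [IsLeftCancelAdd M] (n : σ) (f : MvPolynomial σ k) :
    (monomialMap k a (X n * f)).coeff.support =
      (monomialMap k a f).coeff.support.map (addLeftEmbedding (a n)) := by
  rw [map_mul, monomialMap_X, support_coeff_single_mul _ _ (by simp)]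

theorem exists_mem_span_X_monomialMap_eq {i : σ} {q : AddMonoidAlgebra k M}
    (hq : ∀ b ∈ q.coeff.support, ∃ s ∈ closure (Set.range a), b = a i + s) :
    ∃ g ∈ Ideal.span {X i}, monomialMap k a g = q := by
  suffices q ∈ (Ideal.span {X i}).toAddSubmonoid.map (monomialMap k a).toAddMonoidHom by
    simpa using this
  rw [← sum_coeff_single q]
  refine sum_mem fun b hb => ?_
  obtain ⟨s, hs, rfl⟩ := hq b hb
  obtain ⟨m, rfl⟩ := mem_closure_range_iff_exists_weight.mp hs
  exact ⟨X i * monomial m (q.coeff (a i + m.weight a)),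
    Ideal.mul_mem_right _ _ (Ideal.mem_span_singleton_self _), by simp [single_mul_single]⟩

end

theorem mem_ker_monomialMap_sup_span_X_iff {k σ M : Type*} [CommRing k] [AddCommMonoid M]
    [IsLeftCancelAdd M] {a : σ → M} (i : σ) (f : MvPolynomial σ k) :
    f ∈ RingHom.ker (monomialMap k a) ⊔ Ideal.span {X i} ↔
      ∀ b ∈ (monomialMap k a f).coeff.support, ∃ s ∈ closure (Set.range a), b = a i + s := by
  rw [Ideal.mem_ker_sup_iff]
  refine ⟨?_, fun hf => ?_⟩
  · rintro ⟨g, hg, hfg⟩ b hb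
    obtain ⟨c, rfl⟩ := Ideal.mem_span_singleton.mp hg
    rw [hfg, support_monomialMap_X_mul] at hb
    obtain ⟨s, hs, rfl⟩ := Finset.mem_map.mp hb
    exact ⟨s, support_monomialMap_subset c hs, rfl⟩
  · obtain ⟨g, hg, hfg⟩ := exists_mem_span_X_monomialMap_eq hf
    exact ⟨g, hg, hfg.symm⟩

end MvPolynomial

theorem toricIdeal_eq_ker_monomialMap (k : Type*) [Field k] {e d : ℕ} (a : Fin e → (Fin d → ℕ)) :
    toricIdeal k a = RingHom.ker (monomialMap k a) :=
  rfl

theorem xj_zeroDivisor_iff_apery_general (k : Type*) [Field k] {e d : ℕ}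
    (a : Fin e → (Fin d → ℕ))
    (S : AddSubmonoid (Fin d → ℕ)) (hS : S = AddSubmonoid.closure (Set.range a))
    (i j : Fin e) :
    (∃ s : MvPolynomial (Fin e) k ⧸ (toricIdeal k a ⊔ Ideal.span {X i}),
        s ≠ 0 ∧ Ideal.Quotient.mk (toricIdeal k a ⊔ Ideal.span {X i}) (X j) * s = 0) ↔
      (∃ b, (b ∈ S ∧ ¬ ∃ s ∈ S, b = a i + s) ∧
        ¬ (a j + b ∈ S ∧ ¬ ∃ s ∈ S, a j + b = a i + s)) := by
  change _ ↔ ∃ b, b ∈ S.apery (a i) ∧ a j + b ∉ S.apery (a i)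
  subst hS
  rw [Ideal.Quotient.exists_ne_zero_mk_mul_eq_zero_iff, toricIdeal_eq_ker_monomialMap]
  simp only [mem_ker_monomialMap_sup_span_X_iff]
  constructor
  · rintro ⟨f, hf, hXf⟩
    push Not at hf
    obtain ⟨b, hb, hbAp⟩ := hf
    refine ⟨b, ⟨support_monomialMap_subset f hb, by simpa using hbAp⟩, fun h => h.2 (hXf _ ?_)⟩
    rw [support_monomialMap_X_mul]
    exact Finset.mem_map_of_mem _ hb
  · rintro ⟨b, ⟨hbS, hbAp⟩, hjb⟩
    obtain ⟨m, rfl⟩ := mem_closure_range_iff_exists_weight.mp hbS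
    refine ⟨monomial m 1, by simpa using hbAp, ?_⟩
    simp only [support_monomialMap_X_mul, monomialMap_monomial, coeff_single,
      Finsupp.support_single _ one_ne_zero, Finset.map_singleton, Finset.mem_singleton,
      forall_eq]
    by_contra h
    exact hjb ⟨add_mem (subset_closure ⟨j, rfl⟩) hbS, h⟩

/-- for `e ≥ 3` and `i ≠ j`, `x_j` is a zero-divisor on
`k[x]/(I_A + ⟨x_i⟩)` if and only if there exists `b ∈ Ap(S, a_i)` with
`a_j + b ∉ Ap(S, a_i)`. -/
theorem xj_zeroDivisor_iff_apery (k : Type*) [Field k] {e d : ℕ} (he : 3 ≤ e)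
    (a : Fin e → (Fin d → ℕ)) (ha : Set.range a ⊆ {x | x ≠ 0})
    (S : AddSubmonoid (Fin d → ℕ)) (hS : S = AddSubmonoid.closure (Set.range a))
    (i j : Fin e) (hij : i ≠ j) :
    (∃ s : MvPolynomial (Fin e) k ⧸ (toricIdeal k a ⊔ Ideal.span {X i}),
        s ≠ 0 ∧ Ideal.Quotient.mk (toricIdeal k a ⊔ Ideal.span {X i}) (X j) * s = 0) ↔
      (∃ b, (b ∈ S ∧ ¬ ∃ s ∈ S, b = a i + s) ∧
        ¬ (a j + b ∈ S ∧ ¬ ∃ s ∈ S, a j + b = a i + s)) :=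
  xj_zeroDivisor_iff_apery_general k a S hS i j
end

section
/- Let S be a simplicial affine semigroup in ℕ^d with extremal ray generators E = {a_1,...,a_d}, and let E' ⊂ E. The following are equivalent: (1) Ap(S, E') has a maximal element with respect to ⪯_S; (2) there exists b ∈ Ap(S, E') such that b + a ∉ Ap(S, E') for every a ∈ E \ E'. -/
/-- Apéry set of `S` with respect to the rays indexed by `B`. -/
def aperyIdx {d : ℕ} (S : AddSubmonoid (Fin d → ℕ)) (a : Fin d → (Fin d → ℕ))
    (B : Finset (Fin d)) : Set (Fin d → ℕ) :=
  {x | x ∈ S ∧ ∀ i ∈ B, ¬ ∃ s ∈ S, x = a i + s}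

/-- The semigroup order `u ⪯_S v`. -/
def semigroupLE {d : ℕ} (S : AddSubmonoid (Fin d → ℕ)) (u v : Fin d → ℕ) : Prop :=
  ∃ s ∈ S, v = u + s

/-!
If `b ∈ Ap(S, E')` and `b + s ∈ Ap(S, E')` with `s ∈ S`, then `s ∈ Ap(S, E)`: were `s = a_k + t`,
then `b + a_k` would lie in `Ap(S, E')` (it divides `b + s`), which is impossible for `k ∈ E'`
and is excluded by hypothesis for `k ∉ E'`. Hence the elements of `Ap(S, E')` above `b` lie in
the finite set `b + Ap(S, E)`, and a pointwise maximal one among them is `⪯_S`-maximal.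
Conversely `m + a_i = m` is impossible for a maximal `m`, as `a_i ≠ 0`.
-/

section

variable {d : ℕ} {S : AddSubmonoid (Fin d → ℕ)}

theorem semigroupLE.trans {u v w : Fin d → ℕ} (huv : semigroupLE S u v)
    (hvw : semigroupLE S v w) : semigroupLE S u w := by
  obtain ⟨s, hs, rfl⟩ := huv
  obtain ⟨t, ht, rfl⟩ := hvw
  exact ⟨s + t, S.add_mem hs ht, add_assoc u s t⟩

theorem semigroupLE.le {u v : Fin d → ℕ} (huv : semigroupLE S u v) : u ≤ v := by
  obtain ⟨s, -, rfl⟩ := huv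
  exact le_self_add

theorem exists_maximal_semigroupLE_of_finite {A : Set (Fin d → ℕ)} {b : Fin d → ℕ}
    (hb : b ∈ A) (hfin : {x ∈ A | semigroupLE S b x}.Finite) :
    ∃ m ∈ A, ∀ x ∈ A, semigroupLE S m x → x = m := by
  obtain ⟨m, ⟨hmA, hbm⟩, hmax⟩ := hfin.exists_maximal ⟨b, hb, 0, S.zero_mem, (add_zero b).symm⟩
  exact ⟨m, hmA, fun x hxA hmx =>
    le_antisymm (hmax ⟨hxA, hbm.trans hmx⟩ hmx.le) hmx.le⟩

variable {a : Fin d → (Fin d → ℕ)} {B : Finset (Fin d)}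

theorem mem_aperyIdx_of_add_mem {x y : Fin d → ℕ} (hx : x ∈ S) (hy : y ∈ S)
    (hxy : x + y ∈ aperyIdx S a B) : x ∈ aperyIdx S a B := by
  refine ⟨hx, fun i hi ⟨s, hs, hxs⟩ => hxy.2 i hi ⟨s + y, S.add_mem hs hy, ?_⟩⟩
  rw [hxs, add_assoc]

theorem mem_aperyIdx_univ_of_add_mem (ha : ∀ i, a i ∈ S) {b s : Fin d → ℕ} (hb : b ∈ S)
    (hbB : ∀ i ∈ Bᶜ, b + a i ∉ aperyIdx S a B) (hs : s ∈ S)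
    (hbs : b + s ∈ aperyIdx S a B) : s ∈ aperyIdx S a Finset.univ := by
  by_contra hs'
  obtain ⟨k, t, ht, rfl⟩ : ∃ k, ∃ t ∈ S, s = a k + t := by
    simpa [aperyIdx, hs] using hs'
  have hbk : b + a k ∈ aperyIdx S a B :=
    mem_aperyIdx_of_add_mem (S.add_mem hb (ha k)) ht (by rwa [← add_assoc] at hbs)
  by_cases hk : k ∈ B
  · exact hbk.2 k hk ⟨b, hb, add_comm b (a k)⟩
  · exact hbB k (Finset.mem_compl.2 hk) hbk

theorem finite_setOf_semigroupLE_aperyIdx (ha : ∀ i, a i ∈ S)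
    (hfin : (aperyIdx S a Finset.univ).Finite) {b : Fin d → ℕ} (hb : b ∈ S)
    (hbB : ∀ i ∈ Bᶜ, b + a i ∉ aperyIdx S a B) :
    {x ∈ aperyIdx S a B | semigroupLE S b x}.Finite := by
  refine (hfin.image (b + ·)).subset ?_
  rintro _ ⟨hx, s, hs, rfl⟩
  exact ⟨s, mem_aperyIdx_univ_of_add_mem ha hb hbB hs hx, rfl⟩

end

theorem apery_has_maximal_iff_general {d : ℕ} (S : AddSubmonoid (Fin d → ℕ))
    (a : Fin d → (Fin d → ℕ)) (ha : ∀ i, a i ∈ S)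
    (hE : LinearIndependent ℚ (fun i : Fin d => (fun t => (a i t : ℚ))))
    (hFin : (aperyIdx S a Finset.univ).Finite)
    (E' : Finset (Fin d)) :
    (∃ m ∈ aperyIdx S a E', ∀ x ∈ aperyIdx S a E', semigroupLE S m x → x = m) ↔
    (∃ b ∈ aperyIdx S a E', ∀ i ∈ E'ᶜ, b + a i ∉ aperyIdx S a E') := by
  constructor
  · rintro ⟨m, hm, hmax⟩
    refine ⟨m, hm, fun i _ hmi => hE.ne_zero i ?_⟩
    have hai : a i = 0 := add_eq_left.1 (hmax _ hmi ⟨a i, ha i, rfl⟩)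
    exact funext fun t => by simp [hai]
  · rintro ⟨b, hb, hbE'⟩
    exact exists_maximal_semigroupLE_of_finite hb
      (finite_setOf_semigroupLE_aperyIdx ha hFin hb.1 hbE')

/-- for a simplicial affine semigroup `S` with extremal rays
`E = {a_1,…,a_d}` and `E' ⊂ E`, the Apéry set `Ap(S, E')` has a `⪯_S`-maximal element
iff there is `b ∈ Ap(S, E')` with `b + a_i ∉ Ap(S, E')` for every `a_i ∈ E \ E'`. -/
theorem apery_has_maximal_iff {d : ℕ} (S : AddSubmonoid (Fin d → ℕ))
    (a : Fin d → (Fin d → ℕ)) (ha : ∀ i, a i ∈ S)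
    (hE : LinearIndependent ℚ (fun i : Fin d => (fun t => (a i t : ℚ))))
    (hFin : (aperyIdx S a Finset.univ).Finite)
    (E' : Finset (Fin d)) (hE' : E' ⊂ Finset.univ) :
    (∃ m ∈ aperyIdx S a E', ∀ x ∈ aperyIdx S a E', semigroupLE S m x → x = m) ↔
    (∃ b ∈ aperyIdx S a E', ∀ i ∈ E'ᶜ, b + a i ∉ aperyIdx S a E') :=
  apery_has_maximal_iff_general S a ha hE hFin E'
end

section
/- Let S be a simplicial affine semigroup in ℕ^d with extremal rays E and suppose b ∈ Ap(S, E') for some E' ⊂ E is such that b + a ∉ Ap(S, E') for every a ∈ E \ E'. Then b + c ∉ Ap(S, E') for every c ∈ S \ Ap(S, E). -/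
/-
If `c` lies above some ray `a i` of `E`, then either `i ∈ E'`, and `b + c` lies above `a i`
too, or `i ∉ E'`, and then `b + c` lies above `b + a i`, which is already outside `Ap(S, E')`.
Both cases use that the complement of an Apéry set in `S` is an ideal of `S`.
-/

section Apery

variable {d : ℕ} {S : AddSubmonoid (Fin d → ℕ)} {a : Fin d → (Fin d → ℕ)} {B : Finset (Fin d)}

theorem notMem_aperyIdx_iff {x : Fin d → ℕ} (hx : x ∈ S) :
    x ∉ aperyIdx S a B ↔ ∃ i ∈ B, ∃ s ∈ S, x = a i + s := by
  simp [aperyIdx, hx]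

theorem add_notMem_aperyIdx {x y : Fin d → ℕ} (hx : x ∈ S) (hy : y ∈ S)
    (h : x ∉ aperyIdx S a B) : x + y ∉ aperyIdx S a B := by
  obtain ⟨i, hi, s, hs, rfl⟩ := (notMem_aperyIdx_iff hx).1 h
  rw [notMem_aperyIdx_iff (S.add_mem hx hy)]
  exact ⟨i, hi, s + y, S.add_mem hs hy, add_assoc _ _ _⟩

end Apery

theorem add_not_mem_apery_of_not_mem_aperyE_general {d : ℕ} (S : AddSubmonoid (Fin d → ℕ))
    (a : Fin d → (Fin d → ℕ)) (ha : ∀ i, a i ∈ S)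
    (E' : Finset (Fin d))
    (b : Fin d → ℕ) (hb : b ∈ aperyIdx S a E')
    (hstep : ∀ i ∈ E'ᶜ, b + a i ∉ aperyIdx S a E') :
    ∀ c ∈ S, c ∉ aperyIdx S a Finset.univ → b + c ∉ aperyIdx S a E' := by
  intro c hc hcE
  obtain ⟨i, -, s, hs, rfl⟩ := (notMem_aperyIdx_iff hc).1 hcE
  by_cases hi : i ∈ E'
  · have hcE' : a i + s ∉ aperyIdx S a E' :=
      (notMem_aperyIdx_iff hc).2 ⟨i, hi, s, hs, rfl⟩
    rw [add_comm]
    exact add_notMem_aperyIdx hc hb.1 hcE'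
  · rw [← add_assoc]
    exact add_notMem_aperyIdx (S.add_mem hb.1 (ha i)) hs (hstep i (Finset.mem_compl.2 hi))

/-- if `b ∈ Ap(S, E')` satisfies `b + a ∉ Ap(S, E')` for every
`a ∈ E \ E'`, then `b + c ∉ Ap(S, E')` for every `c ∈ S \ Ap(S, E)`. -/
theorem add_not_mem_apery_of_not_mem_aperyE {d : ℕ} (S : AddSubmonoid (Fin d → ℕ))
    (a : Fin d → (Fin d → ℕ)) (ha : ∀ i, a i ∈ S)
    (hE : LinearIndependent ℚ (fun i : Fin d => (fun t => (a i t : ℚ))))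
    (E' : Finset (Fin d)) (hE' : E' ⊂ Finset.univ)
    (b : Fin d → ℕ) (hb : b ∈ aperyIdx S a E')
    (hstep : ∀ i ∈ E'ᶜ, b + a i ∉ aperyIdx S a E') :
    ∀ c ∈ S, c ∉ aperyIdx S a Finset.univ → b + c ∉ aperyIdx S a E' :=
  add_not_mem_apery_of_not_mem_aperyE_general S a ha E' b hb hstep
end

section
/- Let S be a simplicial affine semigroup in ℕ^3 with extremal rays E = {a_1, a_2, a_3}, and b ∈ S. The complex T_b = {F ⊆ E : b - ∑_{a∈F} a ∈ S} is disconnected if and only if there is a permutation {i,j,k} = {1,2,3} such that b ∉ Ap(S, a_i) ∩ Ap(S, a_j) and b - a_k ∈ Ap(S, a_i) ∩ Ap(S, a_j). -/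
/-!
On three vertices, `T_b` is disconnected exactly when one vertex `k` is isolated while another
vertex exists. Writing `b = a_k + c`, an edge `{k, m}` of `T_b` is the same as `c - a_m ∈ S`, so
`k` is isolated iff `c ∈ Ap(S, a_i) ∩ Ap(S, a_j)` for the other two indices; and for `b ∈ S`,
some `i` or `j` is a vertex iff `b ∉ Ap(S, a_i) ∩ Ap(S, a_j)`.
-/

/-- `i` is a vertex of `T_b`. -/
def isVertex {d : ℕ} (S : AddSubmonoid (Fin d → ℕ)) (a : Fin d → (Fin d → ℕ))
    (b : Fin d → ℕ) (i : Fin d) : Prop :=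
  ∃ s ∈ S, b = a i + s

/-- `{i, j}` is an edge of `T_b`. -/
def isEdge {d : ℕ} (S : AddSubmonoid (Fin d → ℕ)) (a : Fin d → (Fin d → ℕ))
    (b : Fin d → ℕ) (i j : Fin d) : Prop :=
  i ≠ j ∧ ∃ s ∈ S, b = a i + a j + s

/-- `T_b` is disconnected. -/
def TbDisconnected {d : ℕ} (S : AddSubmonoid (Fin d → ℕ)) (a : Fin d → (Fin d → ℕ))
    (b : Fin d → ℕ) : Prop :=
  ∃ i j, isVertex S a b i ∧ isVertex S a b j ∧
    ¬ Relation.ReflTransGen (isEdge S a b) i j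

/-- Membership in `Ap(S, a_i)`. -/
def memApery (S : AddSubmonoid (Fin 3 → ℕ)) (a : Fin 3 → (Fin 3 → ℕ))
    (x : Fin 3 → ℕ) (i : Fin 3) : Prop :=
  x ∈ S ∧ ¬ ∃ s ∈ S, x = a i + s

def IsIsolated {d : ℕ} (S : AddSubmonoid (Fin d → ℕ)) (a : Fin d → (Fin d → ℕ))
    (b : Fin d → ℕ) (i : Fin d) : Prop :=
  isVertex S a b i ∧ ∀ m, ¬ isEdge S a b i m

section General

variable {d : ℕ} {S : AddSubmonoid (Fin d → ℕ)} {a : Fin d → (Fin d → ℕ)} {b : Fin d → ℕ}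

theorem isEdge.symm {i j : Fin d} (h : isEdge S a b i j) : isEdge S a b j i := by
  obtain ⟨hij, s, hs, rfl⟩ := h
  exact ⟨hij.symm, s, hs, by rw [add_comm (a i)]⟩

theorem isEdge_add_left_iff {c : Fin d → ℕ} {k m : Fin d} :
    isEdge S a (a k + c) k m ↔ k ≠ m ∧ isVertex S a c m := by
  simp only [isEdge, isVertex, add_assoc, add_right_inj]

theorem isIsolated_of_not_isEdge {u v w : Fin d} (hcover : ∀ m, m = u ∨ m = v ∨ m = w)
    (hu : isVertex S a b u) (hv : ¬ isEdge S a b u v) (hw : ¬ isEdge S a b u w) :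
    IsIsolated S a b u := by
  refine ⟨hu, fun m hm => ?_⟩
  rcases hcover m with rfl | rfl | rfl
  exacts [hm.1 rfl, hv hm, hw hm]

theorem IsIsolated.not_reflTransGen {u w : Fin d} (hu : IsIsolated S a b u) (hw : w ≠ u) :
    ¬ Relation.ReflTransGen (isEdge S a b) u w := by
  intro h
  rcases Relation.ReflTransGen.cases_head h with rfl | ⟨m, hm, -⟩
  exacts [hw rfl, hu.2 m hm]

theorem tbDisconnected_of_isIsolated {u w : Fin d} (hu : IsIsolated S a b u)
    (hw : isVertex S a b w) (hne : w ≠ u) : TbDisconnected S a b :=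
  ⟨u, w, hu.1, hw, hu.not_reflTransGen hne⟩

end General

theorem Fin.exists_ne_and_ne (i j : Fin 3) : ∃ k, k ≠ i ∧ k ≠ j := by
  revert i j; decide

theorem Fin.eq_or_eq_or_eq {i j k : Fin 3} (hij : i ≠ j) (hik : i ≠ k) (hjk : j ≠ k)
    (m : Fin 3) : m = i ∨ m = j ∨ m = k := by
  revert i j k m; decide

theorem Fin.insert_insert_singleton_eq_univ_iff {i j k : Fin 3} :
    ({i, j, k} : Finset (Fin 3)) = Finset.univ ↔ i ≠ j ∧ i ≠ k ∧ j ≠ k := by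
  revert i j k; decide

section Dim3

variable {S : AddSubmonoid (Fin 3 → ℕ)} {a : Fin 3 → (Fin 3 → ℕ)} {b : Fin 3 → ℕ}

theorem TbDisconnected.exists_isIsolated (h : TbDisconnected S a b) :
    ∃ u w, w ≠ u ∧ IsIsolated S a b u ∧ isVertex S a b w := by
  obtain ⟨i, j, hi, hj, hij⟩ := h
  have hne : i ≠ j := by rintro rfl; exact hij .refl
  obtain ⟨k, hki, hkj⟩ := Fin.exists_ne_and_ne i j
  have hnij : ¬ isEdge S a b i j := fun h => hij (.single h)
  by_cases hik : isEdge S a b i k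
  · -- otherwise `i — k — j` would be a path
    have hjk : ¬ isEdge S a b j k := fun h => hij ((Relation.ReflTransGen.single hik).tail h.symm)
    exact ⟨j, i, hne, isIsolated_of_not_isEdge (Fin.eq_or_eq_or_eq hne.symm hkj.symm hki.symm) hj
      (fun h => hnij h.symm) hjk, hi⟩
  · exact ⟨i, j, hne.symm, isIsolated_of_not_isEdge (Fin.eq_or_eq_or_eq hne hki.symm hkj.symm) hi
      hnij hik, hj⟩

theorem tbDisconnected_iff_exists_isIsolated :
    TbDisconnected S a b ↔ ∃ u w, w ≠ u ∧ IsIsolated S a b u ∧ isVertex S a b w :=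
  ⟨TbDisconnected.exists_isIsolated, fun ⟨_, _, hne, hu, hw⟩ =>
    tbDisconnected_of_isIsolated hu hw hne⟩

theorem not_memApery_and_iff (hb : b ∈ S) (i j : Fin 3) :
    ¬ (memApery S a b i ∧ memApery S a b j) ↔ isVertex S a b i ∨ isVertex S a b j := by
  simp only [memApery, isVertex, hb, true_and, not_and_or, not_not]

theorem isIsolated_iff_memApery {i j k : Fin 3} (hij : i ≠ j) (hik : i ≠ k) (hjk : j ≠ k) :
    IsIsolated S a b k ↔ ∃ c, b = a k + c ∧ memApery S a c i ∧ memApery S a c j := by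
  constructor
  · rintro ⟨⟨c, hc, rfl⟩, hiso⟩
    refine ⟨c, rfl, ⟨hc, fun hi => ?_⟩, ⟨hc, fun hj => ?_⟩⟩
    exacts [hiso i (isEdge_add_left_iff.2 ⟨hik.symm, hi⟩),
      hiso j (isEdge_add_left_iff.2 ⟨hjk.symm, hj⟩)]
  · rintro ⟨c, rfl, ⟨hc, hci⟩, ⟨-, hcj⟩⟩
    exact isIsolated_of_not_isEdge (Fin.eq_or_eq_or_eq hik.symm hjk.symm hij) ⟨c, hc, rfl⟩
      (fun h => hci (isEdge_add_left_iff.1 h).2) (fun h => hcj (isEdge_add_left_iff.1 h).2)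

end Dim3

theorem TbDisconnected_iff_apery_dim3_general (S : AddSubmonoid (Fin 3 → ℕ))
    (a : Fin 3 → (Fin 3 → ℕ))
    (b : Fin 3 → ℕ) (hb : b ∈ S) :
    TbDisconnected S a b ↔
      ∃ i j k : Fin 3, ({i, j, k} : Finset (Fin 3)) = Finset.univ ∧
        ¬ (memApery S a b i ∧ memApery S a b j) ∧
        ∃ c, b = a k + c ∧ memApery S a c i ∧ memApery S a c j := by
  rw [tbDisconnected_iff_exists_isIsolated]
  constructor
  · rintro ⟨k, i, hik, hk, hi⟩
    obtain ⟨j, hjk, hji⟩ := Fin.exists_ne_and_ne k i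
    exact ⟨i, j, k, Fin.insert_insert_singleton_eq_univ_iff.2 ⟨hji.symm, hik, hjk⟩,
      (not_memApery_and_iff hb i j).2 (.inl hi),
      (isIsolated_iff_memApery hji.symm hik hjk).1 hk⟩
  · rintro ⟨i, j, k, huniv, hvert, hiso⟩
    obtain ⟨hij, hik, hjk⟩ := Fin.insert_insert_singleton_eq_univ_iff.1 huniv
    have hk := (isIsolated_iff_memApery hij hik hjk).2 hiso
    rcases (not_memApery_and_iff hb i j).1 hvert with hi | hj
    exacts [⟨k, i, hik, hk, hi⟩, ⟨k, j, hjk, hk, hj⟩]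

/-- for `d = 3`, `T_b` is disconnected iff there is a permutation
`{i,j,k} = {1,2,3}` with `b ∉ Ap(S,a_i) ∩ Ap(S,a_j)` and
`b - a_k ∈ Ap(S,a_i) ∩ Ap(S,a_j)`. -/
theorem TbDisconnected_iff_apery_dim3 (S : AddSubmonoid (Fin 3 → ℕ))
    (a : Fin 3 → (Fin 3 → ℕ)) (ha : ∀ i, a i ∈ S)
    (hE : LinearIndependent ℚ (fun i : Fin 3 => (fun t => (a i t : ℚ))))
    (b : Fin 3 → ℕ) (hb : b ∈ S) :
    TbDisconnected S a b ↔
      ∃ i j k : Fin 3, ({i, j, k} : Finset (Fin 3)) = Finset.univ ∧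
        ¬ (memApery S a b i ∧ memApery S a b j) ∧
        ∃ c, b = a k + c ∧ memApery S a c i ∧ memApery S a c j :=
  TbDisconnected_iff_apery_dim3_general S a b hb
end

section
/- Let S be a simplicial affine semigroup in ℕ^3 with extremal rays E = {a_1, a_2, a_3}. If c is a maximal element of Ap(S, a_i) ∩ Ap(S, a_j) with respect to ⪯_S (for some {i,j,k} = {1,2,3}), then b := c + a_k satisfies: b ∉ Ap(S, a_i) ∩ Ap(S, a_j), b - a_k ∈ Ap(S, a_i) ∩ Ap(S, a_j), and hence T_b is a disconnected simplicial complex. -/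
open Relation

theorem Relation.ReflTransGen.eq_of_forall_not_rel {α : Type*} {r : α → α → Prop} {x y : α}
    (hy : ∀ z, ¬ r z y) (hxy : ReflTransGen r x y) : x = y := by
  rcases hxy.cases_tail with h | ⟨z, -, hzy⟩
  · exact h.symm
  · exact absurd hzy (hy z)

section SimplicialComplex

variable {d : ℕ} (S : AddSubmonoid (Fin d → ℕ)) (a : Fin d → (Fin d → ℕ))

theorem isVertex_add_self {c : Fin d → ℕ} (hc : c ∈ S) (k : Fin d) :
    isVertex S a (c + a k) k :=
  ⟨c, hc, add_comm c (a k)⟩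

theorem not_isEdge_add_of_not_isVertex {c : Fin d → ℕ} {t : Fin d} (hc : ¬ isVertex S a c t)
    (k : Fin d) : ¬ isEdge S a (c + a k) t k := by
  rintro ⟨-, s, hs, hcs⟩
  refine hc ⟨s, hs, add_right_cancel (b := a k) ?_⟩
  rw [hcs, add_right_comm]

theorem tbDisconnected_of_isolated {b : Fin d → ℕ} {u k : Fin d} (hu : isVertex S a b u)
    (hk : isVertex S a b k) (huk : u ≠ k) (hiso : ∀ t, ¬ isEdge S a b t k) :
    TbDisconnected S a b :=
  ⟨u, k, hu, hk, fun h => huk (h.eq_of_forall_not_rel hiso)⟩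

end SimplicialComplex

section Apery

variable (S : AddSubmonoid (Fin 3 → ℕ)) (a : Fin 3 → (Fin 3 → ℕ))

theorem isVertex_or_isVertex_of_not_memApery {x : Fin 3 → ℕ} {i j : Fin 3} (hx : x ∈ S)
    (h : ¬ (memApery S a x i ∧ memApery S a x j)) : isVertex S a x i ∨ isVertex S a x j := by
  by_contra! hv
  exact h ⟨⟨hx, hv.1⟩, ⟨hx, hv.2⟩⟩

theorem not_memApery_add_of_maximal {c s : Fin 3 → ℕ} {i j : Fin 3}
    (hmax : ∀ x, memApery S a x i ∧ memApery S a x j → semigroupLE S c x → x = c)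
    (hs : s ∈ S) (hs0 : s ≠ 0) : ¬ (memApery S a (c + s) i ∧ memApery S a (c + s) j) :=
  fun h => hs0 (add_eq_left.mp (hmax _ h ⟨s, hs, rfl⟩))

end Apery

theorem Fin.ne_iff_of_insert_eq_univ {i j k : Fin 3}
    (h : ({i, j, k} : Finset (Fin 3)) = Finset.univ) (t : Fin 3) : t ≠ k ↔ t = i ∨ t = j := by
  revert i j k t
  decide

/-- if `c` is `⪯_S`-maximal in `Ap(S,a_i) ∩ Ap(S,a_j)` then
`b := c + a_k` satisfies `b ∉ Ap(S,a_i) ∩ Ap(S,a_j)`,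
`b - a_k ∈ Ap(S,a_i) ∩ Ap(S,a_j)`, and `T_b` is disconnected. -/
theorem disconnected_of_maximal_apery (S : AddSubmonoid (Fin 3 → ℕ))
    (a : Fin 3 → (Fin 3 → ℕ)) (ha : ∀ i, a i ∈ S)
    (hE : LinearIndependent ℚ (fun i : Fin 3 => (fun t => (a i t : ℚ))))
    (i j k : Fin 3) (hperm : ({i, j, k} : Finset (Fin 3)) = Finset.univ)
    (c : Fin 3 → ℕ) (hc : memApery S a c i ∧ memApery S a c j)
    (hmax : ∀ x, memApery S a x i ∧ memApery S a x j → semigroupLE S c x → x = c) :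
    ¬ (memApery S a (c + a k) i ∧ memApery S a (c + a k) j) ∧
    (∃ c', c + a k = a k + c' ∧ memApery S a c' i ∧ memApery S a c' j) ∧
    TbDisconnected S a (c + a k) := by
  have hak0 : a k ≠ 0 := fun h => hE.ne_zero k (by ext; simp [h])
  have hb := not_memApery_add_of_maximal S a hmax (ha k) hak0
  refine ⟨hb, ⟨c, add_comm c (a k), hc⟩, ?_⟩
  have hcS : c ∈ S := hc.1.1
  have hne := Fin.ne_iff_of_insert_eq_univ hperm
  have hiso : ∀ t, ¬ isEdge S a (c + a k) t k := by
    intro t ht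
    rcases (hne t).mp ht.1 with rfl | rfl
    exacts [not_isEdge_add_of_not_isVertex S a hc.1.2 k ht,
      not_isEdge_add_of_not_isVertex S a hc.2.2 k ht]
  have hk := isVertex_add_self S a hcS k
  rcases isVertex_or_isVertex_of_not_memApery S a (S.add_mem hcS (ha k)) hb with hv | hv
  · exact tbDisconnected_of_isolated S a hv hk ((hne i).mpr (Or.inl rfl)) hiso
  · exact tbDisconnected_of_isolated S a hv hk ((hne j).mpr (Or.inr rfl)) hiso
end

section
/- Let S be a simplicial affine semigroup in ℕ^4 with extremal rays E = {a_1, a_2, a_3, a_4}, and suppose there is a permutation {i,j,k,l} = {1,2,3,4} and b ∈ Ap(S, a_i) ∩ Ap(S, a_j) with b + a_k - a_i ∈ S and b + a_l - a_i ∈ S. Set c := b + a_k + a_l. Then the simplicial complex T_c = {F ⊆ E : c - ∑_{a∈F} a ∈ S} contains the three edges {i,k}, {i,l}, {k,l} but does not contain the triangle {i,k,l} (i.e., T_c contains a hollow triangle on vertices i, k, l). -/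
/-!
Write `x ≤_S y` for `∃ s ∈ S, y = x + s`. Adding the same element to both sides preserves `≤_S`,
which gives the three edges; conversely, since `ℕ^4` is cancellative, `a_i + a_k + a_l ≤_S b + a_k + a_l`
would cancel to `a_i ≤_S b`, contradicting `b ∈ Ap(S, a_i)`.
-/

section Shift

variable {M : Type*}

theorem exists_mem_add_add_of_exists_mem_add [AddCommMonoid M] {S : AddSubmonoid M} {b x y : M}
    (h : ∃ s ∈ S, b + x = y + s) (z : M) : ∃ s ∈ S, b + x + z = y + z + s := by
  obtain ⟨s, hs, hbx⟩ := h
  exact ⟨s, hs, by rw [hbx, add_right_comm]⟩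

theorem not_exists_mem_add_add_of_not_exists_mem_add [AddCancelCommMonoid M] {S : AddSubmonoid M}
    {b y : M} (h : ¬ ∃ s ∈ S, b = y + s) (z : M) : ¬ ∃ s ∈ S, b + z = y + z + s := by
  rintro ⟨s, hs, hbz⟩
  exact h ⟨s, hs, add_right_cancel (hbz.trans (add_right_comm y z s))⟩

end Shift

theorem hollow_triangle_in_Tc_general (S : AddSubmonoid (Fin 4 → ℕ))
    (a : Fin 4 → (Fin 4 → ℕ))
    (i kk l : Fin 4)
    (b : Fin 4 → ℕ) (hb : b ∈ S)
    (hApi : ¬ ∃ s ∈ S, b = a i + s)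
    (hk : ∃ s ∈ S, b + a kk = a i + s) (hl : ∃ s ∈ S, b + a l = a i + s)
    (c : Fin 4 → ℕ) (hc : c = b + a kk + a l) :
    (∃ s ∈ S, c = a i + a kk + s) ∧
    (∃ s ∈ S, c = a i + a l + s) ∧
    (∃ s ∈ S, c = a kk + a l + s) ∧
    ¬ ∃ s ∈ S, c = a i + a kk + a l + s := by
  subst hc
  refine ⟨?_, exists_mem_add_add_of_exists_mem_add hk (a l), ⟨b, hb, by abel⟩, ?_⟩
  · rw [add_right_comm]
    exact exists_mem_add_add_of_exists_mem_add hl (a kk)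
  · simpa only [add_assoc] using not_exists_mem_add_add_of_not_exists_mem_add hApi (a kk + a l)

/-- (`d = 4`) if `b ∈ Ap(S,a_i) ∩ Ap(S,a_j)` with
`b + a_k - a_i ∈ S` and `b + a_l - a_i ∈ S`, then for `c := b + a_k + a_l`
the simplicial complex `T_c` contains the edges `{i,k}`, `{i,l}`, `{k,l}`
but not the triangle `{i,k,l}` (a hollow triangle on `i, k, l`). -/
theorem hollow_triangle_in_Tc (S : AddSubmonoid (Fin 4 → ℕ))
    (a : Fin 4 → (Fin 4 → ℕ)) (ha : ∀ i, a i ∈ S)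
    (hE : LinearIndependent ℚ (fun i : Fin 4 => (fun t => (a i t : ℚ))))
    (i j kk l : Fin 4) (hperm : ({i, j, kk, l} : Finset (Fin 4)) = Finset.univ)
    (b : Fin 4 → ℕ) (hb : b ∈ S)
    (hApi : ¬ ∃ s ∈ S, b = a i + s) (hApj : ¬ ∃ s ∈ S, b = a j + s)
    (hk : ∃ s ∈ S, b + a kk = a i + s) (hl : ∃ s ∈ S, b + a l = a i + s)
    (c : Fin 4 → ℕ) (hc : c = b + a kk + a l) :
    (∃ s ∈ S, c = a i + a kk + s) ∧
    (∃ s ∈ S, c = a i + a l + s) ∧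
    (∃ s ∈ S, c = a kk + a l + s) ∧
    ¬ ∃ s ∈ S, c = a i + a kk + a l + s :=
  hollow_triangle_in_Tc_general S a i kk l b hb hApi hk hl c hc
end

section
/- Let S be a simplicial affine semigroup in ℕ^d with extremal rays E = {a_1,...,a_d}, and suppose that for every b ∈ S the complex T_b = {F ⊆ E : b - ∑_{a∈F} a ∈ S} has no isolated vertex whenever it is disconnected. Then for every c ∈ Ap(S, E), every index 1 ≤ l ≤ d and every u ∈ ℕ, we have c + u·a_l ∈ Ap(S, E \ {a_l}). -/
/-- `i` is an isolated vertex of `T_b`. -/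
def isIsolated {d : ℕ} (S : AddSubmonoid (Fin d → ℕ)) (a : Fin d → (Fin d → ℕ))
    (b : Fin d → ℕ) (i : Fin d) : Prop :=
  isVertex S a b i ∧ ∀ j, ¬ isEdge S a b i j

section Tb

variable {d : ℕ} {S : AddSubmonoid (Fin d → ℕ)} {a : Fin d → (Fin d → ℕ)} {b : Fin d → ℕ}

lemma isIsolated_add_self {l : Fin d} (hb : b ∈ S) (hAp : ∀ m, m ≠ l → ¬ isVertex S a b m) :
    isIsolated S a (b + a l) l := by
  refine ⟨⟨b, hb, add_comm _ _⟩, fun j ⟨hlj, s, hs, heq⟩ => hAp j (Ne.symm hlj) ⟨s, hs, ?_⟩⟩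
  refine add_right_cancel (b := a l) ?_
  rw [heq]
  abel

lemma tbDisconnected_of_isIsolated_s18 {l m : Fin d} (hl : isIsolated S a b l)
    (hm : isVertex S a b m) (hml : m ≠ l) : TbDisconnected S a b := by
  refine ⟨l, m, hl.1, hm, fun hpath => ?_⟩
  rcases Relation.ReflTransGen.cases_head hpath with h | ⟨j, hj, -⟩
  · exact hml h.symm
  · exact hl.2 j hj

end Tb

theorem apery_stable_of_no_isolated_vertex_general {d : ℕ} (S : AddSubmonoid (Fin d → ℕ))
    (a : Fin d → (Fin d → ℕ)) (ha : ∀ i, a i ∈ S)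
    (hno : ∀ b ∈ S, TbDisconnected S a b → ¬ ∃ i, isIsolated S a b i)
    (c : Fin d → ℕ) (hc : c ∈ S) (hcAp : ∀ t, ¬ ∃ s ∈ S, c = a t + s)
    (l : Fin d) (u : ℕ) :
    (c + u • a l) ∈ S ∧
      ∀ m, m ≠ l → ¬ ∃ s ∈ S, c + u • a l = a m + s := by
  induction u with
  | zero => simpa only [zero_smul, add_zero] using ⟨hc, fun m _ => hcAp m⟩
  | succ u ih =>
    obtain ⟨hb, hbAp⟩ := ih
    have hl : isIsolated S a (c + u • a l + a l) l := isIsolated_add_self hb hbAp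
    rw [succ_nsmul, ← add_assoc]
    exact ⟨S.add_mem hb (ha l), fun m hml hm =>
      hno _ (S.add_mem hb (ha l)) (tbDisconnected_of_isIsolated_s18 hl hm hml) ⟨l, hl⟩⟩

/-- if for every `b ∈ S` the complex `T_b` has no isolated vertex
whenever it is disconnected, then for every `c ∈ Ap(S, E)`, every `l` and every
`u ∈ ℕ`, one has `c + u • a_l ∈ Ap(S, E \ {a_l})`. -/
theorem apery_stable_of_no_isolated_vertex {d : ℕ} (S : AddSubmonoid (Fin d → ℕ))
    (a : Fin d → (Fin d → ℕ)) (ha : ∀ i, a i ∈ S)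
    (hE : LinearIndependent ℚ (fun i : Fin d => (fun t => (a i t : ℚ))))
    (hFin : {x | x ∈ S ∧ ∀ t, ¬ ∃ s ∈ S, x = a t + s}.Finite)
    (hno : ∀ b ∈ S, TbDisconnected S a b → ¬ ∃ i, isIsolated S a b i)
    (c : Fin d → ℕ) (hc : c ∈ S) (hcAp : ∀ t, ¬ ∃ s ∈ S, c = a t + s)
    (l : Fin d) (u : ℕ) :
    (c + u • a l) ∈ S ∧
      ∀ m, m ≠ l → ¬ ∃ s ∈ S, c + u • a l = a m + s :=
  apery_stable_of_no_isolated_vertex_general S a ha hno c hc hcAp l u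
end
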